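/- arXiv:2309.06944 — 3 statements merged into one kernel-verified Lean document; each statement's English description precedes it below -/
import Mathlib

section
/- For every even k ≥ 4 there exists an edge e of the Klee ladder KL_{2k} that is contained in exactly one perfect matching of KL_{2k}. -/
open SimpleGraph
open scoped Classical

/-- `H` is obtained from `G` by expanding the vertex `v` into a triangle. -/
def IsTriangleExpansion {V W : Type} (G : SimpleGraph V) (H : SimpleGraph W) : Prop :=
  ∃ (v : V) (t : Fin 3 → W) (g : {u : V // u ≠ v} → W) (σ : Fin 3 → {u : V // u ≠ v}),
    Function.Injective t ∧ Function.Injective g ∧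
    (Set.range t ∩ Set.range g = ∅) ∧ (Set.range t ∪ Set.range g = Set.univ) ∧
    Function.Injective σ ∧ (∀ i, G.Adj v (σ i).1) ∧
    (∀ u : {u : V // u ≠ v}, G.Adj v u.1 → u ∈ Set.range σ) ∧
    (∀ i j, H.Adj (t i) (t j) ↔ i ≠ j) ∧
    (∀ a b : {u : V // u ≠ v}, H.Adj (g a) (g b) ↔ G.Adj a.1 b.1) ∧
    (∀ i a, H.Adj (t i) (g a) ↔ a = σ i)

/-- Klee-graphs: `K₄` is Klee, and any triangle expansion of a Klee-graph is Klee. -/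
inductive IsKlee : ∀ {V : Type}, SimpleGraph V → Prop
  | base {V : Type} (G : SimpleGraph V) (e : V ≃ Fin 4)
      (h : ∀ a b : V, G.Adj a b ↔ a ≠ b) : IsKlee G
  | expand {V W : Type} (G : SimpleGraph V) (H : SimpleGraph W)
      (hG : IsKlee G) (h : IsTriangleExpansion G H) : IsKlee H

/-- A perfect matching given as a set of edges. -/
def IsPerfectMatchingSet {V : Type} (G : SimpleGraph V) (M : Set (Sym2 V)) : Prop :=
  M ⊆ G.edgeSet ∧ ∀ v : V, ∃! e : Sym2 V, e ∈ M ∧ v ∈ e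

/-- A cubic (3-regular) graph. -/
def IsCubic {V : Type} (G : SimpleGraph V) : Prop :=
  ∀ v : V, (G.neighborSet v).ncard = 3

/-- A circuit: a connected 2-regular subgraph. -/
def IsCircuitSub {V : Type} {G : SimpleGraph V} (C : G.Subgraph) : Prop :=
  C.coe.Connected ∧ ∀ v ∈ C.verts, (C.neighborSet v).ncard = 2

/-- A collection of pairwise vertex-disjoint circuits. -/
def IsDisjointCircuitCollection {V : Type} (G : SimpleGraph V) (𝒞 : Set G.Subgraph) : Prop :=
  (∀ C ∈ 𝒞, IsCircuitSub C) ∧ 𝒞.Pairwise fun C D => Disjoint C.verts D.verts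

/-- The edge cut determined by a vertex set `A`. -/
def cutEdges {V : Type} (G : SimpleGraph V) (A : Set V) : Set (Sym2 V) :=
  {e | e ∈ G.edgeSet ∧ ∃ a b : V, e = s(a, b) ∧ a ∈ A ∧ b ∉ A}

/-- `G` is cyclically `k`-edge-connected: every cyclic edge-cut has at least `k` edges. -/
def IsCyclicallyEdgeConnected {V : Type} (G : SimpleGraph V) (k : ℕ) : Prop :=
  ∀ A : Set V, ¬(G.induce A).IsAcyclic → ¬(G.induce Aᶜ).IsAcyclic →
    k ≤ (cutEdges G A).ncard

/-- A triangle of `G`, as a vertex set. -/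
def IsTriangleSet {V : Type} (G : SimpleGraph V) (T : Set V) : Prop :=
  ∃ a b c : V, T = {a, b, c} ∧ G.Adj a b ∧ G.Adj a c ∧ G.Adj b c

/-- An edge lying on a cycle of length `n`. -/
def LiesOnCycleOfLength {V : Type} [DecidableEq V] (G : SimpleGraph V) (e : Sym2 V) (n : ℕ) : Prop :=
  ∃ (a : V) (w : G.Walk a a), w.IsCycle ∧ w.length = n ∧ e ∈ w.edges

/-- The complement of `M` in `G` is a Hamiltonian cycle. -/
def ComplementIsHamCycle {V : Type} [DecidableEq V] (G : SimpleGraph V) (M : Set (Sym2 V)) : Prop :=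
  ∃ (a : V) (w : G.Walk a a), w.IsHamiltonianCycle ∧ {e | e ∈ w.edges} = G.edgeSet \ M

/-- A `1⁺`-factor: a spanning set of edges with all degrees at least one. -/
def Is1PlusFactor {V : Type} (G : SimpleGraph V) (F : Set (Sym2 V)) : Prop :=
  F ⊆ G.edgeSet ∧ ∀ v : V, ∃ e ∈ F, v ∈ e

/-- The Klee ladder `KL_{2k+2}`: the grid `P₂ □ P_k` together with two adjacent
vertices `inr 0` and `inr 1` joined to the first and last rung, respectively. -/
def kleeLadder (k : ℕ) : SimpleGraph ((Fin 2 × Fin k) ⊕ Fin 2) :=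
  SimpleGraph.fromRel fun a b =>
    (∃ i j j', a = .inl (i, j) ∧ b = .inl (i, j') ∧ (j' : ℕ) = (j : ℕ) + 1) ∨
    (∃ i i' j, a = .inl (i, j) ∧ b = .inl (i', j) ∧ i ≠ i') ∨
    (∃ i j, a = .inr 0 ∧ b = .inl (i, j) ∧ (j : ℕ) = 0) ∨
    (∃ i j, a = .inr 1 ∧ b = .inl (i, j) ∧ (j : ℕ) = k - 1) ∨
    (a = .inr 0 ∧ b = .inr 1)

/-- The ladder (`k`-sided prism) `L_{2k} = C_k □ K₂`. -/
def ladder (k : ℕ) : SimpleGraph (Fin 2 × ZMod k) :=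
  SimpleGraph.fromRel fun a b => (a.1 = b.1 ∧ b.2 = a.2 + 1) ∨ (a.2 = b.2 ∧ a.1 ≠ b.1)

/-- The Möbius ladder `ML_{2k}`: a `2k`-cycle plus all antipodal chords. -/
def mobiusLadder (k : ℕ) : SimpleGraph (ZMod (2 * k)) :=
  SimpleGraph.fromRel fun a b => b = a + 1 ∨ b = a + (k : ZMod (2 * k))

/-- The quasi-ladder `QL_{2m+4}`: the grid `P₂ □ P_m` together with a 4-cycle
on four new vertices `inr (i, 0)` (joined to the first rung) and
`inr (i, 1)` (joined to the last rung). -/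
def quasiLadder (m : ℕ) : SimpleGraph ((Fin 2 × Fin m) ⊕ (Fin 2 × Fin 2)) :=
  SimpleGraph.fromRel fun a b =>
    (∃ i j j', a = .inl (i, j) ∧ b = .inl (i, j') ∧ (j' : ℕ) = (j : ℕ) + 1) ∨
    (∃ i i' j, a = .inl (i, j) ∧ b = .inl (i', j) ∧ i ≠ i') ∨
    (∃ i i', a = .inr (i, 0) ∧ b = .inr (i', 1)) ∨
    (∃ i j, a = .inr (i, 0) ∧ b = .inl (i, j) ∧ (j : ℕ) = 0) ∨
    (∃ i j, a = .inr (i, 1) ∧ b = .inl (i, j) ∧ (j : ℕ) = m - 1)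

/-- The graph obtained from `G` by deleting the endvertices `u, v` of an edge and
adding the edges `αβ` and `γδ`. -/
def reducedGraph {V : Type} (G : SimpleGraph V) (u v α β γ δ : V) :
    SimpleGraph {x : V // x ≠ u ∧ x ≠ v} :=
  SimpleGraph.fromRel fun a b =>
    G.Adj a.1 b.1 ∨ (a.1 = α ∧ b.1 = β) ∨ (a.1 = γ ∧ b.1 = δ)

/-- The cyclic edge-connectivity of `G`. -/
noncomputable def cyclicEdgeConnectivity {V : Type} [Fintype V] (G : SimpleGraph V) : ℕ :=
  if ∃ A : Set V, ¬(G.induce A).IsAcyclic ∧ ¬(G.induce Aᶜ).IsAcyclic then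
    sInf {n | ∃ A : Set V, ¬(G.induce A).IsAcyclic ∧ ¬(G.induce Aᶜ).IsAcyclic ∧
      (cutEdges G A).ncard = n}
  else G.edgeSet.ncard - Fintype.card V + 1

/-!
List the vertices of the Klee ladder along the snake-shaped Hamiltonian path
`u, (0,0), (1,0), (1,1), (0,1), (0,2), (1,2), …, v` (where `u = inr 0`, `v = inr 1`) and
match positions `2m` and `2m+1`: consecutive vertices are adjacent, so this is a perfect
matching. A vertex at an even position `2m > 0` has no neighbour beyond position `2m+1`.
Hence in a perfect matching containing the first edge `u (0,0)`, where by induction all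
earlier vertices are matched among themselves, it can only be matched to its successor.
-/

namespace IsPerfectMatchingSet

variable {V : Type} {G : SimpleGraph V} {M N : Set (Sym2 V)}

lemma exists_adj_mem (hM : IsPerfectMatchingSet G M) (w : V) :
    ∃ y, G.Adj w y ∧ s(w, y) ∈ M := by
  obtain ⟨e, ⟨he, hwe⟩, -⟩ := hM.2 w
  obtain ⟨y, rfl⟩ := Sym2.mem_iff_exists.mp hwe
  exact ⟨y, hM.1 he, he⟩

lemma eq_of_mem (hM : IsPerfectMatchingSet G M) {w y z : V} (hy : s(w, y) ∈ M)
    (hz : s(w, z) ∈ M) : y = z := by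
  obtain ⟨e, -, he⟩ := hM.2 w
  exact Sym2.congr_right.mp
    ((he _ ⟨hy, Sym2.mem_mk_left w y⟩).trans (he _ ⟨hz, Sym2.mem_mk_left w z⟩).symm)

lemma eq_of_subset (hM : IsPerfectMatchingSet G M) (hN : IsPerfectMatchingSet G N)
    (hMN : M ⊆ N) : M = N := by
  refine hMN.antisymm fun e he ↦ ?_
  obtain ⟨x, y⟩ := e
  obtain ⟨f, ⟨hf, hxf⟩, -⟩ := hM.2 x
  obtain ⟨z, rfl⟩ := Sym2.mem_iff_exists.mp hxf
  rwa [hN.eq_of_mem he (hMN hf)]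

end IsPerfectMatchingSet

section BlockMatching

def blockMatching {V : Type} (G : SimpleGraph V) (pos : V → ℕ) : Set (Sym2 V) :=
  {e | ∃ a b, G.Adj a b ∧ pos a / 2 = pos b / 2 ∧ e = s(a, b)}

variable {V : Type} {G : SimpleGraph V} {pos : V → ℕ}

lemma eq_of_div_two_eq (hinj : pos.Injective) {a b c : V} (hab : a ≠ b) (hac : a ≠ c)
    (hb : pos b / 2 = pos a / 2) (hc : pos c / 2 = pos a / 2) : b = c := by
  have := hinj.ne hab
  have := hinj.ne hac
  exact hinj (by omega)

lemma isPerfectMatchingSet_blockMatching (hinj : pos.Injective)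
    (hpair : ∀ w, ∃ w', G.Adj w w' ∧ pos w' / 2 = pos w / 2) :
    IsPerfectMatchingSet G (blockMatching G pos) := by
  refine ⟨fun e ⟨a, b, hab, _, he⟩ ↦ he ▸ hab, fun w ↦ ?_⟩
  obtain ⟨w', hww', hw'⟩ := hpair w
  refine ⟨s(w, w'), ⟨⟨w, w', hww', hw'.symm, rfl⟩, Sym2.mem_mk_left w w'⟩, ?_⟩
  rintro _ ⟨⟨a, b, hab, habp, rfl⟩, hw⟩
  rcases Sym2.mem_iff.mp hw with rfl | rfl
  · rw [eq_of_div_two_eq hinj hab.ne hww'.ne habp.symm hw']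
  · rw [Sym2.eq_swap, eq_of_div_two_eq hinj hab.ne.symm hww'.ne habp hw']

lemma pos_div_two_eq_of_mem (hinj : pos.Injective)
    (hpair : ∀ w, ∃ w', G.Adj w w' ∧ pos w' / 2 = pos w / 2)
    (hback : ∀ x, Even (pos x) → 0 < pos x → ∀ y, G.Adj x y → pos y ≤ pos x + 1)
    {M : Set (Sym2 V)} (hM : IsPerfectMatchingSet G M) {a a' : V} (ha : pos a / 2 = 0)
    (ha' : pos a' / 2 = 0) (haa' : s(a, a') ∈ M) (m : ℕ) :
    ∀ w y, pos w / 2 = m → s(w, y) ∈ M → pos y / 2 = m := by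
  induction m using Nat.strong_induction_on with
  | _ m ih =>
  intro w y hw hwy
  obtain ⟨x, x', hxx', hx, hx', hxx'M⟩ :
      ∃ x x', G.Adj x x' ∧ pos x / 2 = m ∧ pos x' / 2 = m ∧ s(x, x') ∈ M := by
    rcases m.eq_zero_or_pos with rfl | hm
    · exact ⟨a, a', hM.1 haa', ha, ha', haa'⟩
    obtain ⟨w', hww', hw'⟩ := hpair w
    obtain ⟨x, x', hxx', hx, hx', hx_even⟩ :
        ∃ x x', G.Adj x x' ∧ pos x / 2 = m ∧ pos x' / 2 = m ∧ Even (pos x) := by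
      rcases Nat.even_or_odd (pos w) with h | h
      · exact ⟨w, w', hww', hw, hw' ▸ hw, h⟩
      · have := hinj.ne hww'.ne
        rw [Nat.odd_iff] at h
        exact ⟨w', w, hww'.symm, hw' ▸ hw, hw, Nat.even_iff.mpr (by omega)⟩
    refine ⟨x, x', hxx', hx, hx', ?_⟩
    obtain ⟨z, hxz, hxzM⟩ := hM.exists_adj_mem x
    have hz : pos z / 2 = m := by
      have := hback x hx_even (by omega) z hxz
      have := Nat.even_iff.mp hx_even
      by_contra hne
      have := ih (pos z / 2) (by omega) z x rfl (Sym2.eq_swap ▸ hxzM)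
      omega
    rwa [eq_of_div_two_eq hinj hxx'.ne hxz.ne (hx'.trans hx.symm) (hz.trans hx.symm)]
  by_cases hwx : w = x
  · subst hwx
    rwa [hM.eq_of_mem hwy hxx'M]
  · obtain rfl :=
      eq_of_div_two_eq hinj (Ne.symm hwx) hxx'.ne (hw.trans hx.symm) (hx'.trans hx.symm)
    rwa [hM.eq_of_mem hwy (Sym2.eq_swap ▸ hxx'M)]

theorem exists_edge_mem_unique_perfectMatchingSet (hinj : pos.Injective)
    (hpair : ∀ w, ∃ w', G.Adj w w' ∧ pos w' / 2 = pos w / 2)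
    (hback : ∀ x, Even (pos x) → 0 < pos x → ∀ y, G.Adj x y → pos y ≤ pos x + 1)
    {a : V} (ha : pos a = 0) :
    ∃ e ∈ G.edgeSet, ∃! M, IsPerfectMatchingSet G M ∧ e ∈ M := by
  obtain ⟨a', haa', ha'⟩ := hpair a
  have hPM := isPerfectMatchingSet_blockMatching hinj hpair
  refine ⟨s(a, a'), haa', blockMatching G pos, ⟨hPM, a, a', haa', ha'.symm, rfl⟩, ?_⟩
  rintro M ⟨hM, haa'M⟩
  refine hM.eq_of_subset hPM fun e he ↦ ?_
  induction e using Sym2.ind with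
  | _ w y =>
  have hwy := pos_div_two_eq_of_mem hinj hpair hback hM (by omega) (by omega) haa'M _ w y rfl he
  exact ⟨w, y, hM.1 he, hwy.symm, rfl⟩

end BlockMatching

section KleeLadder

variable {n : ℕ}

@[simp]
lemma kleeLadder_adj_inl_inl {i i' : Fin 2} {j j' : Fin n} :
    (kleeLadder n).Adj (.inl (i, j)) (.inl (i', j')) ↔
      i = i' ∧ ((j' : ℕ) = j + 1 ∨ (j : ℕ) = j' + 1) ∨ j = j' ∧ i ≠ i' := by
  simp only [kleeLadder, fromRel_adj]
  constructor
  · rintro ⟨-, h | h⟩ <;> aesop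
  · rintro (⟨rfl, h | h⟩ | ⟨rfl, h⟩)
    · exact ⟨by simp [Fin.ext_iff]; omega, .inl (.inl ⟨i, j, j', rfl, rfl, h⟩)⟩
    · exact ⟨by simp [Fin.ext_iff]; omega, .inr (.inl ⟨i, j', j, rfl, rfl, h⟩)⟩
    · exact ⟨by simpa using h, .inl (.inr (.inl ⟨i, i', j, rfl, rfl, h⟩))⟩

@[simp]
lemma kleeLadder_adj_inl_inr {i : Fin 2} {j : Fin n} {t : Fin 2} :
    (kleeLadder n).Adj (.inl (i, j)) (.inr t) ↔
      t = 0 ∧ (j : ℕ) = 0 ∨ t = 1 ∧ (j : ℕ) = n - 1 := by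
  simp only [kleeLadder, fromRel_adj]
  aesop

@[simp]
lemma kleeLadder_adj_inr_inl {i : Fin 2} {j : Fin n} {t : Fin 2} :
    (kleeLadder n).Adj (.inr t) (.inl (i, j)) ↔
      t = 0 ∧ (j : ℕ) = 0 ∨ t = 1 ∧ (j : ℕ) = n - 1 := by
  rw [adj_comm, kleeLadder_adj_inl_inr]

@[simp]
lemma kleeLadder_adj_inr_inr {s t : Fin 2} :
    (kleeLadder n).Adj (.inr s) (.inr t) ↔ s ≠ t := by
  fin_cases s <;> fin_cases t <;> simp [kleeLadder]

def kleeLadderSnakePos (n : ℕ) : (Fin 2 × Fin n) ⊕ Fin 2 → ℕ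
  | .inl (i, j) => 2 * j + 1 + (i + j) % 2
  | .inr t => if t = 0 then 0 else 2 * n + 1

lemma kleeLadderSnakePos_injective : (kleeLadderSnakePos n).Injective := by
  rintro (⟨i, j⟩ | s) (⟨i', j'⟩ | t) h <;> (try fin_cases s) <;> (try fin_cases t) <;>
    simp_all [kleeLadderSnakePos, Fin.ext_iff] <;> omega

lemma kleeLadder_exists_adj_snakePos_div_two_eq (hn : 1 ≤ n) (w : (Fin 2 × Fin n) ⊕ Fin 2) :
    ∃ w', (kleeLadder n).Adj w w' ∧
      kleeLadderSnakePos n w' / 2 = kleeLadderSnakePos n w / 2 := by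
  rcases w with ⟨i, j⟩ | t
  · by_cases hij : ((i : ℕ) + j) % 2 = 0
    · by_cases hj : (j : ℕ) = 0
      · exact ⟨.inr 0, by simp [hj], by simp [kleeLadderSnakePos]; omega⟩
      · exact ⟨.inl (i, ⟨j - 1, by omega⟩), by simp; omega,
          by simp [kleeLadderSnakePos]; omega⟩
    · by_cases hj : (j : ℕ) + 1 < n
      · exact ⟨.inl (i, ⟨j + 1, hj⟩), by simp, by simp [kleeLadderSnakePos]; omega⟩
      · exact ⟨.inr 1, by simp; omega, by simp [kleeLadderSnakePos]; omega⟩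
  · fin_cases t
    · exact ⟨.inl (0, ⟨0, hn⟩), by simp, by simp [kleeLadderSnakePos]⟩
    · exact ⟨.inl (⟨n % 2, by omega⟩, ⟨n - 1, by omega⟩), by simp,
        by simp [kleeLadderSnakePos]; omega⟩

lemma kleeLadder_snakePos_le_of_adj {x y : (Fin 2 × Fin n) ⊕ Fin 2}
    (hx : Even (kleeLadderSnakePos n x)) (hx0 : 0 < kleeLadderSnakePos n x)
    (hxy : (kleeLadder n).Adj x y) : kleeLadderSnakePos n y ≤ kleeLadderSnakePos n x + 1 := by
  rw [Nat.even_iff] at hx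
  rcases x with ⟨i, j⟩ | s <;> rcases y with ⟨i', j'⟩ | t <;> (try fin_cases s) <;>
    (try fin_cases t) <;> simp_all [kleeLadderSnakePos, Fin.ext_iff] <;> omega

end KleeLadder

theorem kleeLadder_edge_in_unique_pm_general (k : ℕ) (hk : 4 ≤ k) :
    ∃ e ∈ (kleeLadder (k - 1)).edgeSet,
      ∃! M : Set (Sym2 ((Fin 2 × Fin (k - 1)) ⊕ Fin 2)),
        IsPerfectMatchingSet (kleeLadder (k - 1)) M ∧ e ∈ M :=
  exists_edge_mem_unique_perfectMatchingSet kleeLadderSnakePos_injective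
    (kleeLadder_exists_adj_snakePos_div_two_eq (by omega))
    (fun _ hx hx0 _ hxy ↦ kleeLadder_snakePos_le_of_adj hx hx0 hxy) (a := .inr 0) rfl

theorem kleeLadder_edge_in_unique_pm (k : ℕ) (hk : 4 ≤ k) (hke : Even k) :
    ∃ e ∈ (kleeLadder (k - 1)).edgeSet,
      ∃! M : Set (Sym2 ((Fin 2 × Fin (k - 1)) ⊕ Fin 2)),
        IsPerfectMatchingSet (kleeLadder (k - 1)) M ∧ e ∈ M :=
  kleeLadder_edge_in_unique_pm_general k hk
end

section
/- Let G be the ladder L_{2k} (the graph of the k-sided prism, i.e. the Cartesian product of a cycle C_k with K2) for k ≥ 4. Then for every edge e of G there exists a perfect matching M_e of G containing e whose complement E(G) \ M_e is a Hamiltonian cycle of G. -/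
open SimpleGraph
open scoped Classical

/-! A Hamiltonian cycle `H` of a cubic graph uses exactly two of the three edges at each vertex,
so `E(G) \ H` is a perfect matching whose complement is `H`. It therefore suffices to find, for
every edge `e` of the prism, a Hamiltonian cycle avoiding `e`. Start at `(0, c)`, run once around
the top row to `(0, c - 1)`, drop to the bottom row and run back to `(1, c)`: this cycle misses
the top edge `(0, c - 1)(0, c)`, the bottom edge `(1, c - 1)(1, c)` and the rung at `c + 1`, and
varying `c` reaches every edge. -/

open Function SimpleGraph.Walk

section HamiltonianComplement

variable {V : Type} [DecidableEq V] {G : SimpleGraph V}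

theorem cycleGraph_adj_iff_val {n : ℕ} (hn : 2 ≤ n) {p q : Fin n} :
    (cycleGraph n).Adj p q ↔ p.val + 1 = q.val ∨ q.val + 1 = p.val ∨
      (p.val = 0 ∧ q.val + 1 = n) ∨ (q.val = 0 ∧ p.val + 1 = n) := by
  obtain ⟨m, rfl⟩ : ∃ m, n = m + 2 := ⟨n - 2, by omega⟩
  rw [cycleGraph_adj, sub_eq_iff_eq_add', sub_eq_iff_eq_add', Fin.ext_iff, Fin.ext_iff,
    Fin.val_add_one, Fin.val_add_one]
  simp only [Fin.ext_iff, Fin.val_last]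
  split_ifs <;> omega

theorem exists_isHamiltonianCycle_notMem_edges {n : ℕ} (hn : 3 ≤ n) (f : cycleGraph n →g G)
    (hf : Bijective f) {p q : Fin n} (hpq : ¬(cycleGraph n).Adj p q) :
    ∃ (a : V) (w : G.Walk a a), w.IsHamiltonianCycle ∧ s(f p, f q) ∉ w.edges := by
  obtain ⟨m, rfl⟩ : ∃ m, n = m + 3 := ⟨n - 3, by omega⟩
  have hcycle : (cycleGraph.cycle m).IsHamiltonianCycle :=
    isHamiltonianCycle_iff_isCycle_and_length_eq.mpr ⟨cycleGraph.isCycle_cycle, by simp⟩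
  refine ⟨f 0, (cycleGraph.cycle m).map f, hcycle.map hf, ?_⟩
  rw [edges_map, List.mem_map]
  rintro ⟨e, he, hfe⟩
  rw [← Sym2.map_mk, (Sym2.map.injective hf.injective).eq_iff] at hfe
  exact hpq (hfe ▸ (cycleGraph.cycle m).edges_subset_edgeSet he :)

theorem IsCubic.isPerfectMatchingSet_edgeSet_sdiff {a : V} {w : G.Walk a a} (hG : IsCubic G)
    (hw : w.IsHamiltonianCycle) : IsPerfectMatchingSet G (G.edgeSet \ {e | e ∈ w.edges}) := by
  refine ⟨Set.sdiff_subset, fun v => ?_⟩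
  have hsub : w.toSubgraph.neighborSet v ⊆ G.neighborSet v := fun u h => w.toSubgraph.adj_sub h
  have hfin : (G.neighborSet v).Finite := Set.finite_of_ncard_ne_zero (by rw [hG v]; norm_num)
  have hcard : (G.neighborSet v \ w.toSubgraph.neighborSet v).ncard = 1 := by
    rw [Set.ncard_sdiff hsub (hfin.subset hsub), hG v,
      hw.isCycle.ncard_neighborSet_toSubgraph_eq_two (hw.mem_support v)]
  obtain ⟨u, hu⟩ := Set.ncard_eq_one.mp hcard
  have hunique : ∀ x, s(v, x) ∈ G.edgeSet \ {e | e ∈ w.edges} ↔ x = u := by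
    intro x
    rw [← Set.mem_singleton_iff, ← hu]
    simp [adj_toSubgraph_iff_mem_edges]
  refine ⟨s(v, u), ⟨(hunique u).2 rfl, Sym2.mem_mk_left v u⟩, ?_⟩
  rintro e ⟨he, hve⟩
  obtain ⟨x, rfl⟩ := Sym2.mem_iff_exists.mp hve
  rw [(hunique x).1 he]

end HamiltonianComplement

section Ladder

variable {k : ℕ}

theorem ladder_adj (hk : k ≠ 1) {x y : Fin 2 × ZMod k} :
    (ladder k).Adj x y ↔
      (x.1 = y.1 ∧ (y.2 = x.2 + 1 ∨ x.2 = y.2 + 1)) ∨ (x.2 = y.2 ∧ x.1 ≠ y.1) := by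
  have h1 : (1 : ZMod k) ≠ 0 := mt ZMod.one_eq_zero_iff.mp hk
  obtain ⟨i, a⟩ := x
  obtain ⟨j, b⟩ := y
  simp only [ladder, fromRel_adj, ne_eq, Prod.mk.injEq]
  constructor
  · rintro ⟨-, (⟨rfl, rfl⟩ | ⟨rfl, hij⟩) | ⟨rfl, rfl⟩ | ⟨rfl, hij⟩⟩ <;> simp_all [eq_comm]
  · rintro (⟨rfl, rfl | rfl⟩ | ⟨rfl, hij⟩)
    · exact ⟨fun h => h1 (by simpa using h.2.symm), Or.inl (Or.inl ⟨rfl, rfl⟩)⟩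
    · exact ⟨fun h => h1 (by simpa using h.2), Or.inr (Or.inl ⟨rfl, rfl⟩)⟩
    · exact ⟨fun h => hij h.1, Or.inl (Or.inr ⟨rfl, hij⟩)⟩

theorem ladder_edge_cases (hk : k ≠ 1) {e : Sym2 (Fin 2 × ZMod k)}
    (he : e ∈ (ladder k).edgeSet) :
    (∃ i a, e = s((i, a), (i, a + 1))) ∨ ∃ a, e = s((0, a), (1, a)) := by
  induction e using Sym2.ind with
  | _ x y =>
  obtain ⟨i, a⟩ := x
  obtain ⟨j, b⟩ := y
  rw [SimpleGraph.mem_edgeSet, ladder_adj hk] at he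
  simp only at he
  rcases he with ⟨rfl, rfl | rfl⟩ | ⟨rfl, hij⟩
  · exact Or.inl ⟨i, a, rfl⟩
  · exact Or.inl ⟨i, b, Sym2.eq_swap⟩
  · fin_cases i <;> fin_cases j <;> simp_all [Sym2.eq_swap]

theorem ladder_isCubic (hk : 3 ≤ k) : IsCubic (ladder k) := by
  have h2 : (2 : ZMod k) ≠ 0 := by
    rw [← Nat.cast_ofNat, Ne, ZMod.natCast_eq_zero_iff]
    exact fun h => by have := Nat.le_of_dvd two_pos h; omega
  rintro ⟨i, a⟩
  rw [Set.ncard_eq_three]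
  refine ⟨(i, a + 1), (i, a - 1), (i + 1, a), ?_, ?_, ?_, ?_⟩
  · simp only [ne_eq, Prod.mk.injEq, true_and]
    intro h
    exact h2 (by linear_combination h)
  · fin_cases i <;> simp
  · fin_cases i <;> simp
  · ext ⟨j, b⟩
    rw [mem_neighborSet, ladder_adj (by omega)]
    fin_cases i <;> fin_cases j <;> simp [eq_sub_iff_add_eq, eq_comm]

/-- The `x`-th vertex of the Hamiltonian cycle through `(0, c)` described above. -/
def ladderCycleVertex (k : ℕ) (c : ZMod k) (x : Fin (2 * k)) : Fin 2 × ZMod k :=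
  if x.val < k then (0, c + x.val) else (1, c - 1 - x.val)

theorem ladderCycleVertex_injective (c : ZMod k) : Injective (ladderCycleVertex k c) := by
  intro x y h
  have hx := x.isLt
  have hy := y.isLt
  unfold ladderCycleVertex at h
  split_ifs at h with hxk hyk hyk <;> simp only [Prod.mk.injEq] at h
  · have hmod := (ZMod.natCast_eq_natCast_iff' _ _ _).mp (add_left_cancel h.2)
    rw [Nat.mod_eq_of_lt hxk, Nat.mod_eq_of_lt hyk] at hmod
    exact Fin.ext hmod
  · exact absurd h.1 (by decide)
  · exact absurd h.1 (by decide)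
  · have hmod := (ZMod.natCast_eq_natCast_iff' _ _ _).mp (sub_right_injective h.2)
    rw [Nat.mod_eq_sub_mod (by omega), Nat.mod_eq_sub_mod (by omega : k ≤ y.val),
      Nat.mod_eq_of_lt (by omega), Nat.mod_eq_of_lt (by omega)] at hmod
    exact Fin.ext (by omega)

theorem ladderCycleVertex_bijective [NeZero k] (c : ZMod k) :
    Bijective (ladderCycleVertex k c) :=
  (Fintype.bijective_iff_injective_and_card _).mpr
    ⟨ladderCycleVertex_injective c, by simp [ZMod.card]⟩

theorem ladderCycleVertex_adj_of_succ (hk : 2 ≤ k) (c : ZMod k) {x y : Fin (2 * k)}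
    (hxy : x.val + 1 = y.val ∨ (x.val + 1 = 2 * k ∧ y.val = 0)) :
    (ladder k).Adj (ladderCycleVertex k c x) (ladderCycleVertex k c y) := by
  have hstep : (x.val : ZMod k) + 1 = y.val := by
    rcases hxy with h | ⟨h, h0⟩
    · rw [← h]; push_cast; rfl
    · rw [h0, ← Nat.cast_one, ← Nat.cast_add, h]; simp
  rw [ladder_adj (by omega)]
  unfold ladderCycleVertex
  split_ifs with hx hy hy
  · left; exact ⟨rfl, Or.inl (by rw [← hstep]; ring)⟩
  · right
    have : (y.val : ZMod k) = 0 := by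
      rw [ZMod.natCast_eq_zero_iff]
      exact ⟨1, by omega⟩
    exact ⟨by linear_combination hstep + 2 * this, by simp⟩
  · right
    have : (y.val : ZMod k) = 0 := by rw [show y.val = 0 by omega, Nat.cast_zero]
    exact ⟨by linear_combination -hstep - 2 * this, by simp⟩
  · left; exact ⟨rfl, Or.inr (by rw [← hstep]; ring)⟩

theorem ladderCycleVertex_adj (hk : 2 ≤ k) (c : ZMod k) {x y : Fin (2 * k)}
    (hxy : (cycleGraph (2 * k)).Adj x y) :
    (ladder k).Adj (ladderCycleVertex k c x) (ladderCycleVertex k c y) := by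
  rw [cycleGraph_adj_iff_val (by omega)] at hxy
  rcases hxy with h | h | ⟨h0, h⟩ | ⟨h0, h⟩
  · exact ladderCycleVertex_adj_of_succ hk c (Or.inl h)
  · exact (ladderCycleVertex_adj_of_succ hk c (Or.inl h)).symm
  · exact (ladderCycleVertex_adj_of_succ hk c (Or.inr ⟨h, h0⟩)).symm
  · exact ladderCycleVertex_adj_of_succ hk c (Or.inr ⟨h, h0⟩)

theorem exists_not_adj_ladderCycleVertex_eq (hk : 3 ≤ k) {e : Sym2 (Fin 2 × ZMod k)}
    (he : e ∈ (ladder k).edgeSet) :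
    ∃ (c : ZMod k) (p q : Fin (2 * k)), ¬(cycleGraph (2 * k)).Adj p q ∧
      e = s(ladderCycleVertex k c p, ladderCycleVertex k c q) := by
  rcases ladder_edge_cases (by omega) he with ⟨i, a, rfl⟩ | ⟨a, rfl⟩
  · fin_cases i
    · refine ⟨a + 1, ⟨0, by omega⟩, ⟨k - 1, by omega⟩, ?_, ?_⟩
      · rw [cycleGraph_adj_iff_val (by omega)]; dsimp only; omega
      · rw [ladderCycleVertex, ladderCycleVertex, if_pos (by dsimp only; omega),
          if_pos (by dsimp only; omega), Sym2.eq_swap]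
        simp [Nat.cast_sub (by omega : 1 ≤ k)]
    · refine ⟨a + 1, ⟨k, by omega⟩, ⟨2 * k - 1, by omega⟩, ?_, ?_⟩
      · rw [cycleGraph_adj_iff_val (by omega)]; dsimp only; omega
      · rw [ladderCycleVertex, ladderCycleVertex, if_neg (by dsimp only; omega),
          if_neg (by dsimp only; omega)]
        simp [Nat.cast_sub (by omega : 1 ≤ 2 * k)]
  · refine ⟨a - 1, ⟨1, by omega⟩, ⟨2 * k - 2, by omega⟩, ?_, ?_⟩
    · rw [cycleGraph_adj_iff_val (by omega)]; dsimp only; omega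
    · rw [ladderCycleVertex, ladderCycleVertex, if_pos (by dsimp only; omega),
        if_neg (by dsimp only; omega)]
      simp [Nat.cast_sub (by omega : 2 ≤ 2 * k)]
      ring

end Ladder

theorem ladder_pm_complement_hamiltonian (k : ℕ) (hk : 4 ≤ k) :
    ∀ e ∈ (ladder k).edgeSet,
      ∃ M : Set (Sym2 (Fin 2 × ZMod k)), IsPerfectMatchingSet (ladder k) M ∧ e ∈ M ∧
        ComplementIsHamCycle (ladder k) M := by
  intro e he
  have : NeZero k := ⟨by omega⟩
  obtain ⟨c, p, q, hpq, rfl⟩ := exists_not_adj_ladderCycleVertex_eq (by omega) he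
  obtain ⟨a, w, hw, hpqw⟩ := exists_isHamiltonianCycle_notMem_edges (by omega)
    ⟨_, ladderCycleVertex_adj (by omega) c⟩ (ladderCycleVertex_bijective c) hpq
  exact ⟨_, (ladder_isCubic (by omega)).isPerfectMatchingSet_edgeSet_sdiff hw, ⟨he, hpqw⟩,
    a, w, hw, (Set.sdiff_sdiff_cancel_left w.edges_subset_edgeSet).symm⟩
end

section
/- Let G be the Möbius ladder ML_{2k} for k ≥ 4. Then for every edge e of G there exists a perfect matching M_e of G containing e whose complement is a Hamiltonian cycle, and moreover there exists a second perfect matching M'_e ≠ M_e containing e. -/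
open SimpleGraph
open scoped Classical

/-!
Every vertex of a cubic graph meets two edges of a Hamiltonian cycle, so the remaining edges
form a perfect matching; it therefore suffices to find, for each edge `e` of `ML_{2k}`, a
Hamiltonian cycle avoiding `e`. Writing the vertices as `ZMod (2k)`, with rim edges `{x, x+1}`
and chords `{x, x+k}`, the rim itself avoids every chord, and for a rim edge `{b, b+1}` the
cycle `b+1, …, b+k, b, b-1, …, b+k+1` avoids `{b, b+1}` and uses only the chords at `b` and
`b+1`. The second matching through a chord `{a, a+k}` is the complement of the latter cycle
for `b = a+1`; through a rim edge `{a, a+1}` it is the alternate rim matching `{a+2i, a+2i+1}`,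
which misses the chord at `a-1` lying in the first matching.
-/

theorem ZMod.natCast_ne_zero_of_lt {n j : ℕ} (h0 : 0 < j) (hj : j < n) : (j : ZMod n) ≠ 0 :=
  fun h => by
    have := Nat.le_of_dvd h0 ((ZMod.natCast_eq_zero_iff j n).1 h)
    omega

theorem ZMod.exists_eq_two_mul_or_eq_two_mul_add_one {n : ℕ} (j : ZMod n) :
    ∃ i, j = 2 * i ∨ j = 2 * i + 1 := by
  obtain ⟨z, hz | hz⟩ := Int.even_or_odd' (ZMod.cast j : ℤ)
  · exact ⟨z, Or.inl (by rw [← ZMod.intCast_zmod_cast j, hz]; push_cast; ring)⟩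
  · exact ⟨z, Or.inr (by rw [← ZMod.intCast_zmod_cast j, hz]; push_cast; ring)⟩

theorem ZMod.two_mul_ne_two_mul_add_one (k : ℕ) (i j : ZMod (2 * k)) : 2 * i ≠ 2 * j + 1 := by
  intro h
  have h1 : (1 : ZMod (2 * k)) = 2 * (i - j) := by linear_combination -h
  have h2 := congrArg (ZMod.castHom (dvd_mul_right 2 k) (ZMod 2)) h1
  rw [map_one, map_mul, map_ofNat, show (2 : ZMod 2) = 0 from rfl, zero_mul] at h2
  exact one_ne_zero h2

theorem SimpleGraph.cycleGraph.mem_edges_cycle {m : ℕ} {e : Sym2 (Fin (m + 3))} :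
    e ∈ (cycleGraph.cycle m).edges ↔ ∃ i, s(i, i + 1) = e := by
  constructor
  · intro he
    have hadj := (cycleGraph.cycle m).edges_subset_edgeSet he
    induction e using Sym2.ind with
    | _ u v =>
      rcases cycleGraph_adj.1 hadj with h | h
      · exact ⟨v, by rw [← sub_eq_iff_eq_add'.1 h, Sym2.eq_swap]⟩
      · exact ⟨u, by rw [← sub_eq_iff_eq_add'.1 h]⟩
  · rintro ⟨i, rfl⟩
    have hi := i.isLt
    rw [Walk.mk_mem_edges_iff_exists]
    refine ⟨m + 2 - i, by simp only [cycleGraph.length_cycle]; omega, ?_⟩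
    rw [cycleGraph.getVert_cycle (by omega), cycleGraph.getVert_cycle (by omega), Sym2.eq_swap]
    congr 1 <;> ext <;> simp only [Fin.val_add_one]
    · exact Nat.mod_eq_of_lt (by omega) |>.trans (by omega)
    · split_ifs with h
      · simp [h]
      · simp only [Fin.ext_iff, Fin.val_last] at h
        exact Nat.mod_eq_of_lt (by omega) |>.trans (by omega)

section General

variable {V : Type} {G : SimpleGraph V}

theorem exists_isHamiltonianCycle_of_bijective [DecidableEq V] {n : ℕ} (hn : 3 ≤ n)
    {f : ZMod n → V} (hf : Function.Bijective f) (hadj : ∀ i, G.Adj (f i) (f (i + 1))) :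
    ∃ (a : V) (w : G.Walk a a), w.IsHamiltonianCycle ∧
      w.edgeSet = Set.range fun i => s(f i, f (i + 1)) := by
  obtain ⟨m, rfl⟩ : ∃ m, n = m + 3 := ⟨n - 3, by omega⟩
  let φ : cycleGraph (m + 3) →g G :=
    ⟨f, fun {u v} h => by
      rcases cycleGraph_adj.1 h with h | h
      · exact (sub_eq_iff_eq_add'.1 h ▸ hadj v).symm
      · exact sub_eq_iff_eq_add'.1 h ▸ hadj u⟩
  have hcycle : (cycleGraph.cycle m).IsHamiltonianCycle :=
    Walk.isHamiltonianCycle_iff_isCycle_and_length_eq.2 ⟨cycleGraph.isCycle_cycle, by simp⟩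
  refine ⟨_, (cycleGraph.cycle m).map φ, hcycle.map hf, ?_⟩
  ext e
  simp only [Walk.mem_edgeSet, Walk.edges_map, List.mem_map, cycleGraph.mem_edges_cycle,
    Set.mem_range]
  constructor
  · rintro ⟨_, ⟨i, rfl⟩, rfl⟩
    exact ⟨i, rfl⟩
  · rintro ⟨i, rfl⟩
    exact ⟨_, ⟨i, rfl⟩, rfl⟩

theorem isPerfectMatchingSet_range_alternate {k : ℕ} {f : ZMod (2 * k) → V}
    (hf : Function.Bijective f) (hadj : ∀ i, G.Adj (f i) (f (i + 1))) :
    IsPerfectMatchingSet G (Set.range fun i => s(f (2 * i), f (2 * i + 1))) := by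
  refine ⟨by rintro _ ⟨i, rfl⟩; exact hadj (2 * i), fun v => ?_⟩
  obtain ⟨j, rfl⟩ := hf.2 v
  have mem_iff : ∀ i, f j ∈ s(f (2 * i), f (2 * i + 1)) ↔ j = 2 * i ∨ j = 2 * i + 1 := by
    simp [hf.1.eq_iff]
  obtain ⟨i, hi⟩ := ZMod.exists_eq_two_mul_or_eq_two_mul_add_one j
  refine ⟨_, ⟨⟨i, rfl⟩, (mem_iff i).2 hi⟩, ?_⟩
  rintro _ ⟨⟨i', rfl⟩, hi'⟩
  have h2 : 2 * i' = 2 * i := by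
    rcases (mem_iff i').1 hi' with h' | h' <;> rcases hi with h | h
    · rw [← h, h']
    · exact absurd (h'.symm.trans h) (ZMod.two_mul_ne_two_mul_add_one k _ _)
    · exact absurd (h.symm.trans h') (ZMod.two_mul_ne_two_mul_add_one k _ _)
    · exact add_right_cancel (h'.symm.trans h)
  simp only [h2]

theorem IsCubic.isPerfectMatchingSet_diff_edgeSet [DecidableEq V] (hG : IsCubic G) {a : V}
    {w : G.Walk a a} (hw : w.IsHamiltonianCycle) :
    IsPerfectMatchingSet G (G.edgeSet \ w.edgeSet) := by
  refine ⟨Set.sdiff_subset, fun v => ?_⟩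
  have hC : (w.toSubgraph.neighborSet v).ncard = 2 :=
    hw.isCycle.ncard_neighborSet_toSubgraph_eq_two (hw.mem_support v)
  have hdiff : (G.neighborSet v \ w.toSubgraph.neighborSet v).ncard = 1 := by
    rw [Set.ncard_sdiff (w.toSubgraph.neighborSet_subset v)
      (Set.finite_of_ncard_ne_zero (by omega)), hG v, hC]
  obtain ⟨u, hu⟩ := Set.ncard_eq_one.1 hdiff
  have mem_iff : ∀ x, s(v, x) ∈ G.edgeSet \ w.edgeSet ↔ x = u := by
    intro x
    rw [← Set.mem_singleton_iff, ← hu]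
    simp [Walk.adj_toSubgraph_iff_mem_edges]
  refine ⟨s(v, u), ⟨(mem_iff u).2 rfl, Sym2.mem_mk_left v u⟩, ?_⟩
  rintro e ⟨he, hve⟩
  obtain ⟨x, rfl⟩ := Sym2.mem_iff_exists.1 hve
  rw [(mem_iff x).1 he]

theorem complementIsHamCycle_diff_edgeSet [DecidableEq V] {a : V} {w : G.Walk a a}
    (hw : w.IsHamiltonianCycle) : ComplementIsHamCycle G (G.edgeSet \ w.edgeSet) :=
  ⟨a, w, hw, (Set.sdiff_sdiff_cancel_left fun _ he => w.edges_subset_edgeSet he).symm⟩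

end General

namespace mobiusLadder

variable {k : ℕ}

theorem two_mul_natCast_self : 2 * (k : ZMod (2 * k)) = 0 := by
  exact_mod_cast ZMod.natCast_self (2 * k)

theorem adj_iff (hk : 1 ≤ k) {u v : ZMod (2 * k)} :
    (mobiusLadder k).Adj u v ↔ v = u + 1 ∨ u = v + 1 ∨ v = u + k := by
  have h1 := ZMod.natCast_ne_zero_of_lt (n := 2 * k) (j := 1) (by omega) (by omega)
  have hk0 := ZMod.natCast_ne_zero_of_lt (n := 2 * k) (j := k) (by omega) (by omega)
  have hkk := two_mul_natCast_self (k := k)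
  push_cast at h1
  simp only [mobiusLadder, fromRel_adj]
  constructor
  · rintro ⟨-, (h | h) | (h | h)⟩
    · exact Or.inl h
    · exact Or.inr (Or.inr h)
    · exact Or.inr (Or.inl h)
    · exact Or.inr (Or.inr (by linear_combination -h - hkk))
  · rintro (h | h | h) <;> subst h
    · exact ⟨fun h => h1 (by linear_combination -h), Or.inl (Or.inl rfl)⟩
    · exact ⟨fun h => h1 (by linear_combination h), Or.inr (Or.inl rfl)⟩
    · exact ⟨fun h => hk0 (by linear_combination -h), Or.inl (Or.inr rfl)⟩

theorem adj_add_one (hk : 1 ≤ k) (v : ZMod (2 * k)) : (mobiusLadder k).Adj v (v + 1) :=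
  (adj_iff hk).2 (Or.inl rfl)

theorem adj_add_natCast (hk : 1 ≤ k) (v : ZMod (2 * k)) : (mobiusLadder k).Adj v (v + k) :=
  (adj_iff hk).2 (Or.inr (Or.inr rfl))

theorem neighborSet_eq (hk : 1 ≤ k) (v : ZMod (2 * k)) :
    (mobiusLadder k).neighborSet v = {v + 1, v - 1, v + k} := by
  ext u
  simp only [mem_neighborSet, adj_iff hk, Set.mem_insert_iff, Set.mem_singleton_iff]
  rw [eq_sub_iff_add_eq, eq_comm (a := u + 1)]

theorem isCubic (hk : 2 ≤ k) : IsCubic (mobiusLadder k) := by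
  intro v
  have h2 := ZMod.natCast_ne_zero_of_lt (n := 2 * k) (j := 2) (by omega) (by omega)
  have hk1 := ZMod.natCast_ne_zero_of_lt (n := 2 * k) (j := k - 1) (by omega) (by omega)
  have hk1' := ZMod.natCast_ne_zero_of_lt (n := 2 * k) (j := k + 1) (by omega) (by omega)
  push_cast [Nat.cast_sub (show 1 ≤ k by omega)] at h2 hk1 hk1'
  rw [neighborSet_eq (by omega), Set.ncard_eq_three]
  exact ⟨_, _, _, fun h => h2 (by linear_combination h), fun h => hk1 (by linear_combination -h),
    fun h => hk1' (by linear_combination -h), rfl⟩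

theorem mem_edgeSet_cases (hk : 1 ≤ k) {e : Sym2 (ZMod (2 * k))}
    (he : e ∈ (mobiusLadder k).edgeSet) :
    (∃ x, e = s(x, x + 1)) ∨ ∃ x, e = s(x, x + (k : ZMod (2 * k))) := by
  induction e using Sym2.ind with
  | _ u v =>
    rw [mem_edgeSet, adj_iff hk] at he
    rcases he with rfl | rfl | rfl
    · exact Or.inl ⟨u, rfl⟩
    · exact Or.inl ⟨v, Sym2.eq_swap⟩
    · exact Or.inr ⟨u, rfl⟩

theorem mk_add_one_ne_mk_add_natCast (hk : 2 ≤ k) (x y : ZMod (2 * k)) :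
    s(x, x + 1) ≠ s(y, y + k) := by
  have hk1 := ZMod.natCast_ne_zero_of_lt (n := 2 * k) (j := k - 1) (by omega) (by omega)
  have hk1' := ZMod.natCast_ne_zero_of_lt (n := 2 * k) (j := k + 1) (by omega) (by omega)
  push_cast [Nat.cast_sub (show 1 ≤ k by omega)] at hk1 hk1'
  rw [Ne, Sym2.eq_iff]
  rintro (⟨rfl, h⟩ | ⟨rfl, h⟩)
  · exact hk1 (by linear_combination -h)
  · exact hk1' (by linear_combination h)

theorem mk_add_one_inj (hk : 2 ≤ k) {x y : ZMod (2 * k)} :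
    s(x, x + 1) = s(y, y + 1) ↔ x = y := by
  have h2 := ZMod.natCast_ne_zero_of_lt (n := 2 * k) (j := 2) (by omega) (by omega)
  push_cast at h2
  refine ⟨fun h => ?_, fun h => h ▸ rfl⟩
  rcases Sym2.eq_iff.1 h with ⟨h, -⟩ | ⟨rfl, h⟩
  · exact h
  · exact absurd (by linear_combination h) h2

theorem eq_or_eq_add_natCast_of_mk_add_natCast_eq {x y : ZMod (2 * k)}
    (h : s(x, x + k) = s(y, y + k)) : x = y ∨ x = y + k := by
  rcases Sym2.eq_iff.1 h with ⟨h, -⟩ | ⟨h, -⟩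
  · exact Or.inl h
  · exact Or.inr h

theorem isPerfectMatchingSet_range_alternate_rim (hk : 1 ≤ k) (a : ZMod (2 * k)) :
    IsPerfectMatchingSet (mobiusLadder k) (Set.range fun i => s(a + 2 * i, a + 2 * i + 1)) := by
  simp only [add_assoc]
  exact isPerfectMatchingSet_range_alternate (f := (a + ·)) (Equiv.addLeft a).bijective
    fun i => by rw [← add_assoc]; exact adj_add_one hk (a + i)

theorem exists_isHamiltonianCycle_rim (hk : 2 ≤ k) :
    ∃ (a : ZMod (2 * k)) (w : (mobiusLadder k).Walk a a), w.IsHamiltonianCycle ∧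
      w.edgeSet = Set.range fun x => s(x, x + 1) :=
  exists_isHamiltonianCycle_of_bijective (n := 2 * k) (by omega) Function.bijective_id
    (adj_add_one (by omega))

/-- The `i`-th vertex of the Hamiltonian cycle `b+1, b+2, …, b+k, b, b-1, …, b+k+1`. -/
def twoChordCycleVert (k : ℕ) (b i : ZMod (2 * k)) : ZMod (2 * k) :=
  if i.val < k then b + 1 + i else b + k - i

theorem twoChordCycleVert_natCast_of_lt {b : ZMod (2 * k)} {j : ℕ} (hj : j < k) :
    twoChordCycleVert k b j = b + 1 + j := by
  rw [twoChordCycleVert, ZMod.val_cast_of_lt (by omega), if_pos hj]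

theorem twoChordCycleVert_natCast_of_le {b : ZMod (2 * k)} {j : ℕ} (hkj : k ≤ j)
    (hj : j < 2 * k) : twoChordCycleVert k b j = b + k - j := by
  rw [twoChordCycleVert, ZMod.val_cast_of_lt hj, if_neg (by omega)]

theorem twoChordCycleVert_surjective (hk : 1 ≤ k) (b : ZMod (2 * k)) :
    Function.Surjective (twoChordCycleVert k b) := by
  have : NeZero (2 * k) := ⟨by omega⟩
  intro v
  set j := (v - b - 1).val
  have hjv : (j : ZMod (2 * k)) = v - b - 1 := ZMod.natCast_zmod_val _
  rcases lt_or_ge j k with h | h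
  · exact ⟨j, by rw [twoChordCycleVert_natCast_of_lt h, hjv]; ring⟩
  · refine ⟨(3 * k - 1 - j : ℕ), ?_⟩
    have hjlt : j < 2 * k := ZMod.val_lt _
    rw [twoChordCycleVert_natCast_of_le (by omega) (by omega),
      Nat.cast_sub (by omega), Nat.cast_sub (by omega), hjv]
    push_cast
    linear_combination -two_mul_natCast_self (k := k)

theorem twoChordCycleVert_edge (hk : 1 ≤ k) (b i : ZMod (2 * k)) :
    (∃ x ≠ b, s(twoChordCycleVert k b i, twoChordCycleVert k b (i + 1)) = s(x, x + 1)) ∨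
      s(twoChordCycleVert k b i, twoChordCycleVert k b (i + 1)) = s(b, b + k) ∨
      s(twoChordCycleVert k b i, twoChordCycleVert k b (i + 1)) = s(b + 1, b + 1 + k) := by
  have : NeZero (2 * k) := ⟨by omega⟩
  obtain ⟨j, hj, rfl⟩ : ∃ j < 2 * k, i = j := ⟨i.val, i.val_lt, (ZMod.natCast_zmod_val i).symm⟩
  have hkk := two_mul_natCast_self (k := k)
  have hsucc : (j : ZMod (2 * k)) + 1 = ((j + 1 : ℕ) : ZMod (2 * k)) := by push_cast; rfl
  have hne (m : ℕ) (h0 : 0 < m) (hm : m < 2 * k) : (m : ZMod (2 * k)) ≠ 0 :=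
    ZMod.natCast_ne_zero_of_lt h0 hm
  rw [hsucc]
  obtain h | h | h | h : j + 1 < k ∨ j + 1 = k ∨ (k ≤ j ∧ j + 1 < 2 * k) ∨ j + 1 = 2 * k := by
    omega
  · rw [twoChordCycleVert_natCast_of_lt (by omega), twoChordCycleVert_natCast_of_lt h]
    refine Or.inl ⟨b + 1 + j, fun hb => hne (j + 1) (by omega) (by omega) ?_, ?_⟩
    · push_cast; linear_combination hb
    · push_cast; ring_nf
  · have hkj : (k : ZMod (2 * k)) = j + 1 := by rw [hsucc]; exact congrArg Nat.cast h.symm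
    rw [twoChordCycleVert_natCast_of_lt (by omega),
      twoChordCycleVert_natCast_of_le (by omega) (by omega), Sym2.eq_swap, ← hsucc, hkj]
    exact Or.inr (Or.inl (by ring_nf))
  · rw [twoChordCycleVert_natCast_of_le h.1 hj, twoChordCycleVert_natCast_of_le (by omega) h.2,
      Sym2.eq_swap]
    refine Or.inl ⟨b + k - (j + 1), fun hb => hne (j + 1 - k) (by omega) (by omega) ?_, ?_⟩
    · push_cast [Nat.cast_sub (show k ≤ j + 1 by omega)]; linear_combination -hb
    · push_cast; ring_nf
  · have hj0 : ((j + 1 : ℕ) : ZMod (2 * k)) = (0 : ℕ) := by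
      rw [h, ZMod.natCast_self, Nat.cast_zero]
    have hj' : (j : ZMod (2 * k)) = 2 * k - 1 := by
      rw [eq_sub_iff_add_eq, hsucc, h]; push_cast; rfl
    rw [twoChordCycleVert_natCast_of_le (by omega) hj, hj0,
      twoChordCycleVert_natCast_of_lt (by omega), Sym2.eq_swap, hj']
    refine Or.inr (Or.inr ?_)
    push_cast
    congr 1
    · ring
    · linear_combination -hkk

theorem adj_twoChordCycleVert (hk : 1 ≤ k) (b i : ZMod (2 * k)) :
    (mobiusLadder k).Adj (twoChordCycleVert k b i) (twoChordCycleVert k b (i + 1)) := by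
  rw [← mem_edgeSet]
  rcases twoChordCycleVert_edge hk b i with ⟨x, -, h⟩ | h | h <;> rw [h]
  · exact adj_add_one hk x
  · exact adj_add_natCast hk b
  · exact adj_add_natCast hk (b + 1)

theorem exists_isHamiltonianCycle_twoChord (hk : 3 ≤ k) (b : ZMod (2 * k)) :
    ∃ (a : ZMod (2 * k)) (w : (mobiusLadder k).Walk a a), w.IsHamiltonianCycle ∧
      s(b, b + 1) ∉ w.edgeSet ∧ s(b - 1, b - 1 + k) ∉ w.edgeSet := by
  have : NeZero (2 * k) := ⟨by omega⟩
  obtain ⟨a, w, hw, hedges⟩ := exists_isHamiltonianCycle_of_bijective (by omega)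
    (twoChordCycleVert_surjective (by omega) b).bijective_of_finite
    (adj_twoChordCycleVert (by omega) b)
  refine ⟨a, w, hw, ?_, ?_⟩ <;> rw [hedges] <;> rintro ⟨i, hi⟩ <;> dsimp only at hi <;>
    rcases twoChordCycleVert_edge (by omega) b i with ⟨x, hxb, h⟩ | h | h <;> rw [h] at hi
  · exact hxb ((mk_add_one_inj (by omega)).1 hi)
  · exact mk_add_one_ne_mk_add_natCast (by omega) b b hi.symm
  · exact mk_add_one_ne_mk_add_natCast (by omega) b (b + 1) hi.symm
  · exact mk_add_one_ne_mk_add_natCast (by omega) x (b - 1) hi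
  · rcases eq_or_eq_add_natCast_of_mk_add_natCast_eq hi with h' | h'
    · exact ZMod.natCast_ne_zero_of_lt (n := 2 * k) (j := 1) (by omega) (by omega)
        (by push_cast; linear_combination h')
    · exact ZMod.natCast_ne_zero_of_lt (n := 2 * k) (j := k - 1) (by omega) (by omega)
        (by push_cast [Nat.cast_sub (show 1 ≤ k by omega)]; linear_combination -h')
  · rcases eq_or_eq_add_natCast_of_mk_add_natCast_eq hi with h' | h'
    · exact ZMod.natCast_ne_zero_of_lt (n := 2 * k) (j := 2) (by omega) (by omega)
        (by push_cast; linear_combination h')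
    · exact ZMod.natCast_ne_zero_of_lt (n := 2 * k) (j := k - 2) (by omega) (by omega)
        (by push_cast [Nat.cast_sub (show 2 ≤ k by omega)]; linear_combination -h')

end mobiusLadder

theorem mobiusLadder_pm_complement_hamiltonian (k : ℕ) (hk : 4 ≤ k) :
    ∀ e ∈ (mobiusLadder k).edgeSet,
      ∃ M : Set (Sym2 (ZMod (2 * k))),
        (IsPerfectMatchingSet (mobiusLadder k) M ∧ e ∈ M ∧
          ComplementIsHamCycle (mobiusLadder k) M) ∧
        ∃ M' : Set (Sym2 (ZMod (2 * k))),
          IsPerfectMatchingSet (mobiusLadder k) M' ∧ e ∈ M' ∧ M' ≠ M := by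
  intro e he
  have hcubic := mobiusLadder.isCubic (k := k) (by omega)
  rcases mobiusLadder.mem_edgeSet_cases (by omega) he with ⟨a, rfl⟩ | ⟨a, rfl⟩
  · obtain ⟨_, w, hw, hrim, hchord⟩ := mobiusLadder.exists_isHamiltonianCycle_twoChord (by omega) a
    refine ⟨_, ⟨hcubic.isPerfectMatchingSet_diff_edgeSet hw, ⟨he, hrim⟩,
      complementIsHamCycle_diff_edgeSet hw⟩, _,
      mobiusLadder.isPerfectMatchingSet_range_alternate_rim (by omega) a, ⟨0, by simp⟩,
      fun h => ?_⟩
    have hc : s(a - 1, a - 1 + k) ∈ (mobiusLadder k).edgeSet \ w.edgeSet :=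
      ⟨mobiusLadder.adj_add_natCast (by omega) _, hchord⟩
    obtain ⟨i, hi⟩ := h ▸ hc
    exact mobiusLadder.mk_add_one_ne_mk_add_natCast (by omega) _ _ hi
  · obtain ⟨_, w₀, hw₀, hrim₀⟩ := mobiusLadder.exists_isHamiltonianCycle_rim (k := k) (by omega)
    obtain ⟨_, w₁, hw₁, hrim₁, hchord₁⟩ :=
      mobiusLadder.exists_isHamiltonianCycle_twoChord (by omega) (a + 1)
    rw [add_sub_cancel_right] at hchord₁
    have hchord₀ : s(a, a + k) ∉ w₀.edgeSet := by
      rw [hrim₀]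
      rintro ⟨x, hx⟩
      exact mobiusLadder.mk_add_one_ne_mk_add_natCast (by omega) x a hx
    refine ⟨_, ⟨hcubic.isPerfectMatchingSet_diff_edgeSet hw₀, ⟨he, hchord₀⟩,
      complementIsHamCycle_diff_edgeSet hw₀⟩, _,
      hcubic.isPerfectMatchingSet_diff_edgeSet hw₁, ⟨he, hchord₁⟩, fun h => ?_⟩
    have hr : s(a + 1, a + 1 + 1) ∈ (mobiusLadder k).edgeSet \ w₁.edgeSet :=
      ⟨mobiusLadder.adj_add_one (by omega) _, hrim₁⟩
    exact (h ▸ hr).2 (hrim₀ ▸ ⟨a + 1, rfl⟩)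
end
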